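/- Let K ≥ 2, let Φ : ℝ^K → ℝ^K be defined by Φ_k(x) = γ_{k−1}·(e^(−(x_k−x_{k−1})) − 1) − γ_k·(e^(−(x_{k+1}−x_k)) − 1) with γ_k = k·(K−k)/2 and γ₀ = γ_K = 0, and let e₁ = (1/√K)·(1, …, 1) ∈ ℝ^K. Fix θ with 1 < θ < 3/2, T > 0, and constants M > 0, C_θ > 0. Suppose ξ : [T, ∞) → ℝ^K is continuously differentiable and satisfies: (a) ‖ξ(t)‖ ≤ M for all t ≥ T; (b) ξ'(t) = t^(−1)·Φ(ξ(t)) + r(t) where ‖r(t)‖ ≤ C_θ·t^(−θ) for all t ≥ T; (c) |(ξ(t), e₁)| ≤ C_θ·t^(−θ+1) for all t ≥ T. Then there exists C' > 0 such that ‖ξ(t)‖ ≤ C'·t^(−θ+1) for all t ≥ T, where (·,·) and ‖·‖ denote the Euclidean inner product and norm on ℝ^K. -/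

import Mathlib

/-!
Summation by parts gives `⟨x, Φ x⟩ = ∑ γ_{l+1} d_l (e^{-d_l} - 1)` with `d_l = x_{l+1} - x_l`, and
`d (e^{-d} - 1) ≤ -((1 - e^{-B}) / B) d²` for `|d| ≤ B`. The weighted path Laplacian
`∑ γ_{l+1} d_l²` dominates `‖x‖² - ⟨x, e₁⟩²`, so with Young's inequality `f = ‖ξ‖²` satisfies
`f' ≤ -(c / t) f + C t^{1 - 2θ}` on any half-line where `‖ξ‖ ≤ B / 2`, for `c = e^{-B}`.
Integrating, `f = O(t^{2 - 2θ})` as soon as `c > 2θ - 2`. Taking `B = 2M` this already gives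
`f → 0`; once `ξ` is small, `c = θ - 1/2` is admissible, and `θ - 1/2 > 2θ - 2` because `θ < 3/2`.
-/

/-- The coefficients `γ_k = k (K - k) / 2`. -/
noncomputable def γcoef (K k : ℕ) : ℝ := (k : ℝ) * ((K : ℝ) - (k : ℝ)) / 2

/-- The interaction map `Φ : ℝ^K → ℝ^K` (written in `0`-based indexing; the boundary
terms carry the vanishing coefficients `γ₀ = γ_K = 0`). -/
noncomputable def Phi (K : ℕ) (x : Fin K → ℝ) : Fin K → ℝ := fun i =>
  let x' : ℕ → ℝ := fun n => if h : n < K then x ⟨n, h⟩ else 0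
  γcoef K i * (Real.exp (-(x' i - x' ((i : ℕ) - 1))) - 1) -
    γcoef K ((i : ℕ) + 1) * (Real.exp (-(x' ((i : ℕ) + 1) - x' i)) - 1)

open Finset Real

lemma γcoef_zero (K : ℕ) : γcoef K 0 = 0 := by simp [γcoef]

lemma γcoef_nonneg {K k : ℕ} (h : k ≤ K) : 0 ≤ γcoef K k :=
  div_nonneg (mul_nonneg k.cast_nonneg (sub_nonneg.2 (by exact_mod_cast h))) zero_le_two

lemma sum_range_natCast (n : ℕ) : ∑ i ∈ range n, (i : ℝ) = n * (n - 1) / 2 := by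
  induction n with
  | zero => simp
  | succ n ih => rw [sum_range_succ, ih]; push_cast; ring

lemma card_mul_sum_sq_sub_sq_sum (y : ℕ → ℝ) (n : ℕ) :
    n * ∑ i ∈ range n, y i ^ 2 - (∑ i ∈ range n, y i) ^ 2
      = ∑ j ∈ range n, ∑ i ∈ range j, (y j - y i) ^ 2 := by
  induction n with
  | zero => simp
  | succ n ih =>
    have expand : ∑ i ∈ range n, (y n - y i) ^ 2
        = n * y n ^ 2 - 2 * y n * ∑ i ∈ range n, y i + ∑ i ∈ range n, y i ^ 2 := by
      simp only [sub_sq, sum_add_distrib, sum_sub_distrib, sum_const, card_range,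
        nsmul_eq_mul, mul_sum]
    rw [sum_range_succ (fun j => ∑ i ∈ range j, (y j - y i) ^ 2), expand, ← ih,
      sum_range_succ, sum_range_succ]
    push_cast; ring

lemma sq_sub_le_mul_sum_sq_sub (y : ℕ → ℝ) {i j : ℕ} (hij : i ≤ j) :
    (y j - y i) ^ 2 ≤ ((j : ℝ) - i) * ∑ l ∈ Ico i j, (y (l + 1) - y l) ^ 2 := by
  have := sq_sum_le_card_mul_sum_sq (s := Ico i j) (f := fun l => y (l + 1) - y l)
  rwa [sum_Ico_sub y hij, Nat.card_Ico, Nat.cast_sub hij] at this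

/-- The weight `n γ_{l+1}` is the total length of the paths `i → j` crossing the edge `l → l+1`. -/
lemma sum_sum_ite_mem_Ico (n l : ℕ) (hl : l < n) :
    ∑ j ∈ range n, ∑ i ∈ range j, (if l ∈ Ico i j then ((j : ℝ) - i) else 0)
      = n * γcoef n (l + 1) := by
  have inner : ∀ j ∈ range n, ∑ i ∈ range j, (if l ∈ Ico i j then ((j : ℝ) - i) else 0)
      = if j ∈ Ico (l + 1) n then ∑ i ∈ range (l + 1), ((j : ℝ) - i) else 0 := by
    intro j hj
    rw [← sum_filter]
    split_ifs with hlj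
    · congr 1; ext i; simp only [mem_filter, mem_range, mem_Ico] at *; omega
    · exact sum_eq_zero fun i hi => by simp only [mem_filter, mem_range, mem_Ico] at *; omega
  rw [sum_congr rfl inner, sum_ite_mem,
    inter_eq_right.2 fun j hj => by simp only [mem_Ico, mem_range] at *; omega]
  obtain ⟨m, rfl⟩ : ∃ m, n = l + 1 + m := ⟨n - (l + 1), by omega⟩
  simp only [sum_sub_distrib, sum_const, card_range, nsmul_eq_mul, sum_range_natCast,
    sum_Ico_eq_sum_range, Nat.card_Ico, add_tsub_cancel_left, Nat.cast_add, γcoef]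
  push_cast
  rw [← mul_sum, sum_add_distrib, sum_const, card_range, nsmul_eq_mul, sum_range_natCast]
  ring

/-- The path Laplacian with edge weights `γ_{l+1}` has spectral gap `1`: bound `(y j - y i)²` by
Cauchy–Schwarz along the path from `i` to `j`. -/
lemma card_mul_sum_sq_sub_sq_sum_le (y : ℕ → ℝ) (n : ℕ) :
    n * ∑ i ∈ range n, y i ^ 2 - (∑ i ∈ range n, y i) ^ 2
      ≤ n * ∑ l ∈ range n, γcoef n (l + 1) * (y (l + 1) - y l) ^ 2 := by
  set e : ℕ → ℝ := fun l => (y (l + 1) - y l) ^ 2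
  calc n * ∑ i ∈ range n, y i ^ 2 - (∑ i ∈ range n, y i) ^ 2
      = ∑ j ∈ range n, ∑ i ∈ range j, (y j - y i) ^ 2 := card_mul_sum_sq_sub_sq_sum y n
    _ ≤ ∑ j ∈ range n, ∑ i ∈ range j, ∑ l ∈ range n,
          (if l ∈ Ico i j then ((j : ℝ) - i) else 0) * e l := by
      gcongr with j hj i hi
      refine (sq_sub_le_mul_sum_sq_sub y (mem_range.1 hi).le).trans_eq ?_
      simp only [ite_mul, zero_mul]
      rw [sum_ite_mem, inter_eq_right.2 fun l hl => by
        simp only [mem_Ico, mem_range] at *; omega, mul_sum]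
    _ = ∑ l ∈ range n, (∑ j ∈ range n, ∑ i ∈ range j,
          (if l ∈ Ico i j then ((j : ℝ) - i) else 0)) * e l := by
      simp only [sum_mul]
      rw [sum_comm]
      exact sum_congr rfl fun j _ => sum_comm
    _ = n * ∑ l ∈ range n, γcoef n (l + 1) * e l := by
      rw [mul_sum]
      exact sum_congr rfl fun l hl => by rw [sum_sum_ite_mem_Ico n l (mem_range.1 hl)]; ring

lemma sum_sq_sub_sq_sum_div_le (y : ℕ → ℝ) (n : ℕ) :
    ∑ i ∈ range n, y i ^ 2 - (∑ i ∈ range n, y i) ^ 2 / n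
      ≤ ∑ l ∈ range n, γcoef n (l + 1) * (y (l + 1) - y l) ^ 2 := by
  rcases n.eq_zero_or_pos with rfl | hn
  · simp
  · have hn' : (0 : ℝ) < n := by exact_mod_cast hn
    rw [← mul_le_mul_iff_of_pos_left hn', mul_sub, mul_div_cancel₀ _ hn'.ne']
    exact card_mul_sum_sq_sub_sq_sum_le y n

lemma mul_exp_neg_sub_one_le {B d : ℝ} (hB : 0 < B) (hd : |d| ≤ B) :
    d * (exp (-d) - 1) ≤ -((1 - exp (-B)) / B) * d ^ 2 := by
  set c := (1 - exp (-B)) / B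
  have hc1 : c ≤ 1 := (div_le_one hB).2 (by linarith [add_one_le_exp (-B)])
  rcases le_or_gt d 0 with hd0 | hd0
  · have : d * (exp (-d) - 1) ≤ d * (-d) :=
      mul_le_mul_of_nonpos_left (by linarith [add_one_le_exp (-d)]) hd0
    nlinarith [sq_nonneg d]
  · -- the chord of `exp` over `[-B, 0]` lies above its graph
    have hdB : d / B ≤ 1 := (div_le_one hB).2 (abs_le.1 hd).2
    have hchord := convexOn_exp.2 (Set.mem_univ 0) (Set.mem_univ (-B)) (sub_nonneg.2 hdB)
      (div_pos hd0 hB).le (sub_add_cancel 1 (d / B))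
    have harg : (1 - d / B) • (0 : ℝ) + (d / B) • (-B) = -d := by
      simp only [smul_eq_mul, mul_zero, zero_add]; field_simp
    have hval : (1 - d / B) • exp 0 + (d / B) • exp (-B) = 1 - c * d := by
      simp only [smul_eq_mul, exp_zero, c]; field_simp; ring
    rw [harg, hval] at hchord
    nlinarith

/-- The `x'` in the definition of `Phi`. -/
def zeroExtend {K : ℕ} (x : Fin K → ℝ) (n : ℕ) : ℝ := if h : n < K then x ⟨n, h⟩ else 0

section zeroExtend

variable {K : ℕ} (x : Fin K → ℝ)

@[simp] lemma zeroExtend_val (i : Fin K) : zeroExtend x i = x i := by simp [zeroExtend]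

lemma zeroExtend_self : zeroExtend x K = 0 := by simp [zeroExtend]

lemma sum_fin_eq_sum_range_zeroExtend (g : ℝ → ℝ) :
    ∑ k, g (x k) = ∑ n ∈ range K, g (zeroExtend x n) := by
  rw [← Fin.sum_univ_eq_sum_range (fun n => g (zeroExtend x n))]; simp

lemma abs_zeroExtend_le (n : ℕ) : |zeroExtend x n| ≤ √(∑ k, x k ^ 2) := by
  unfold zeroExtend
  split_ifs with h
  · rw [← sqrt_sq_eq_abs]
    exact sqrt_le_sqrt (single_le_sum (f := fun k => x k ^ 2) (fun k _ => sq_nonneg _)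
      (mem_univ (⟨n, h⟩ : Fin K)))
  · simp

lemma sum_mul_Phi :
    ∑ i, x i * Phi K x i = ∑ l ∈ range K, γcoef K (l + 1) *
      ((zeroExtend x (l + 1) - zeroExtend x l) *
        (exp (-(zeroExtend x (l + 1) - zeroExtend x l)) - 1)) := by
  set X := zeroExtend x
  set H : ℕ → ℝ := fun n => X n * (γcoef K n * (exp (-(X n - X (n - 1))) - 1))
  have hshift : ∑ n ∈ range K, H n = ∑ l ∈ range K, H (l + 1) := by
    have h := sum_range_succ' H K
    rw [sum_range_succ, show H K = 0 by simp [H, X, zeroExtend_self],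
      show H 0 = 0 by simp [H, γcoef_zero]] at h
    simpa using h
  calc ∑ i, x i * Phi K x i
      = ∑ n ∈ range K, (H n - X n * (γcoef K (n + 1) * (exp (-(X (n + 1) - X n)) - 1))) := by
        rw [← Fin.sum_univ_eq_sum_range]; simp [Phi, H, X, zeroExtend, mul_sub]
    _ = _ := by
        rw [sum_sub_distrib, hshift, ← sum_sub_distrib]
        exact sum_congr rfl fun l _ => by simp only [H, add_tsub_cancel_right]; ring

lemma sq_sum_mul_inv_sqrt_card :
    (∑ k, x k * (1 / √K)) ^ 2 = (∑ n ∈ range K, zeroExtend x n) ^ 2 / K := by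
  rw [← sum_mul, mul_pow, div_pow, one_pow, sq_sqrt K.cast_nonneg, mul_one_div]
  congr 2
  exact sum_fin_eq_sum_range_zeroExtend x id

lemma sum_mul_Phi_le {B c : ℝ} (hB : 0 < B) (hxB : 2 * √(∑ k, x k ^ 2) ≤ B) (hc : 0 ≤ c)
    (hcB : c ≤ (1 - exp (-B)) / B) :
    ∑ i, x i * Phi K x i ≤ -c * (∑ k, x k ^ 2 - (∑ k, x k * (1 / √K)) ^ 2) := by
  set X := zeroExtend x
  set D := ∑ l ∈ range K, γcoef K (l + 1) * (X (l + 1) - X l) ^ 2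
  have hγ : ∀ l ∈ range K, 0 ≤ γcoef K (l + 1) := fun l hl =>
    γcoef_nonneg (mem_range.1 hl)
  have hPhi : ∑ i, x i * Phi K x i ≤ -((1 - exp (-B)) / B) * D := by
    rw [sum_mul_Phi, mul_sum]
    refine sum_le_sum fun l hl => ?_
    refine (mul_le_mul_of_nonneg_left (mul_exp_neg_sub_one_le hB ?_) (hγ l hl)).trans_eq
      (by ring)
    linarith [abs_sub (X (l + 1)) (X l), abs_zeroExtend_le x (l + 1), abs_zeroExtend_le x l]
  have hgap : ∑ k, x k ^ 2 - (∑ k, x k * (1 / √K)) ^ 2 ≤ D := by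
    rw [sq_sum_mul_inv_sqrt_card, sum_fin_eq_sum_range_zeroExtend x (· ^ 2)]
    exact sum_sq_sub_sq_sum_div_le X K
  have hD : 0 ≤ D := sum_nonneg fun l hl => mul_nonneg (hγ l hl) (sq_nonneg _)
  nlinarith [mul_le_mul_of_nonneg_left hgap hc, mul_le_mul_of_nonneg_right hcB hD]

end zeroExtend

lemma exp_neg_le_one_sub_exp_neg_div {B : ℝ} (hB : 0 < B) : exp (-B) ≤ (1 - exp (-B)) / B := by
  rw [le_div_iff₀ hB, exp_neg]
  have := add_one_le_exp B
  have := exp_pos B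
  field_simp
  linarith

lemma sum_two_mul_inv_mul_Phi_add_le {K : ℕ} (x ρ : Fin K → ℝ) {t B c p R : ℝ} (ht : 0 < t)
    (hB : 0 < B) (hxB : 2 * √(∑ k, x k ^ 2) ≤ B) (hc : 0 < c) (hcB : c ≤ (1 - exp (-B)) / B)
    (hp : |∑ k, x k * (1 / √K)| ≤ p) (hR : √(∑ k, ρ k ^ 2) ≤ R) :
    ∑ k, 2 * x k * (t⁻¹ * Phi K x k + ρ k)
      ≤ -(c / t) * ∑ k, x k ^ 2 + (2 * c / t * p ^ 2 + t / c * R ^ 2) := by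
  set S := ∑ k, x k ^ 2
  have hsplit : ∑ k, 2 * x k * (t⁻¹ * Phi K x k + ρ k)
      = 2 / t * ∑ k, x k * Phi K x k + 2 * ∑ k, x k * ρ k := by
    simp only [mul_sum, ← sum_add_distrib]
    exact sum_congr rfl fun k _ => by ring
  have hPhi : ∑ k, x k * Phi K x k ≤ -c * (S - p ^ 2) := by
    have hp2 : (∑ k, x k * (1 / √K)) ^ 2 ≤ p ^ 2 := sq_le_sq' (abs_le.1 hp).1 (abs_le.1 hp).2
    nlinarith [sum_mul_Phi_le x hB hxB hc.le hcB]
  have hρ : ∑ k, x k * ρ k ≤ √S * R :=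
    (sum_mul_le_sqrt_mul_sqrt _ x ρ).trans (mul_le_mul_of_nonneg_left hR (sqrt_nonneg _))
  have hyoung := two_mul_le_add_mul_sq (a := √S) (b := R) (div_pos hc ht)
  rw [sq_sqrt (show 0 ≤ S from sum_nonneg fun k _ => sq_nonneg _), inv_div] at hyoung
  have ht2 : 0 ≤ 2 / t := by positivity
  have e : 2 / t * (-c * (S - p ^ 2)) = -(2 * (c / t)) * S + 2 * c / t * p ^ 2 := by ring
  rw [hsplit]
  linarith [mul_le_mul_of_nonneg_left hPhi ht2]

lemma sum_two_mul_inv_mul_Phi_add_le_rpow {K : ℕ} (x ρ : Fin K → ℝ) {t B c θ Cθ : ℝ} (ht : 0 < t)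
    (hB : 0 < B) (hxB : 2 * √(∑ k, x k ^ 2) ≤ B) (hc : 0 < c) (hcB : c ≤ (1 - exp (-B)) / B)
    (hp : |∑ k, x k * (1 / √K)| ≤ Cθ * t ^ (-θ + 1)) (hR : √(∑ k, ρ k ^ 2) ≤ Cθ * t ^ (-θ)) :
    ∑ k, 2 * x k * (t⁻¹ * Phi K x k + ρ k)
      ≤ -(c / t) * ∑ k, x k ^ 2 + (2 * c + c⁻¹) * Cθ ^ 2 * t ^ (-(2 * θ - 1)) := by
  refine (sum_two_mul_inv_mul_Phi_add_le x ρ ht hB hxB hc hcB hp hR).trans_eq ?_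
  have h₁ : (t ^ (-θ + 1)) ^ 2 = t ^ (-(2 * θ - 1)) * t := by
    rw [← rpow_mul_natCast ht.le, ← rpow_add_one ht.ne']; congr 1; push_cast; ring
  have h₂ : (t ^ (-θ)) ^ 2 * t = t ^ (-(2 * θ - 1)) := by
    rw [← rpow_mul_natCast ht.le, ← rpow_add_one ht.ne']; congr 1; push_cast; ring
  rw [mul_pow, mul_pow, h₁, ← h₂]
  field_simp

lemma hasDerivWithinAt_sum_sq {ι : Type*} [Fintype ι] {u : ℝ → ι → ℝ} {u' : ι → ℝ}
    {s : Set ℝ} {t : ℝ} (hu : ∀ k, HasDerivWithinAt (fun τ => u τ k) (u' k) s t) :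
    HasDerivWithinAt (fun τ => ∑ k, u τ k ^ 2) (∑ k, 2 * u t k * u' k) s t := by
  refine (HasDerivWithinAt.fun_sum fun k _ => (hu k).fun_pow 2).congr_deriv ?_
  simp

lemma le_mul_rpow_of_hasDerivWithinAt_le {f f' : ℝ → ℝ} {T₀ a β E : ℝ} (hT₀ : 0 < T₀)
    (hβa : β - 1 < a) (hf : ∀ t ≥ T₀, HasDerivWithinAt f (f' t) (Set.Ici T₀) t)
    (hf' : ∀ t ≥ T₀, f' t ≤ -(a / t) * f t + E * t ^ (-β)) :
    ∃ C, ∀ t ≥ T₀, f t ≤ C * t ^ (1 - β) := by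
  set σ := a + 1 - β
  have hσ : 0 < σ := by simp only [σ]; linarith
  set g : ℝ → ℝ := fun t => t ^ a * f t - E / σ * t ^ σ
  set g' : ℝ → ℝ := fun t => a * t ^ (a - 1) * f t + t ^ a * f' t - E / σ * (σ * t ^ (σ - 1))
  have hg : ∀ t ≥ T₀, HasDerivWithinAt g (g' t) (Set.Ici T₀) t :=
    fun t ht =>
      have ht' : t ≠ 0 := (hT₀.trans_le ht).ne'
      (((hasDerivAt_rpow_const (Or.inl ht')).hasDerivWithinAt.mul (hf t ht)).sub
        ((hasDerivAt_rpow_const (Or.inl ht')).hasDerivWithinAt.const_mul _))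
  have hanti : AntitoneOn g (Set.Ici T₀) := by
    refine antitoneOn_of_hasDerivWithinAt_nonpos (f' := g') (convex_Ici T₀)
      (fun t ht => (hg t ht).continuousWithinAt) (fun t ht => ?_) (fun t ht => ?_)
    all_goals rw [interior_Ici] at ht
    · exact ((hg t ht.le).hasDerivAt (Ici_mem_nhds ht)).hasDerivWithinAt
    · have ht₀ : 0 < t := hT₀.trans ht
      have e : g' t = t ^ a * (f' t - (-(a / t) * f t + E * t ^ (-β))) := by
        simp only [g']
        rw [rpow_sub_one ht₀.ne', show σ - 1 = a + -β by ring, rpow_add ht₀]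
        field_simp
        ring
      rw [e]
      exact mul_nonpos_of_nonneg_of_nonpos (rpow_nonneg ht₀.le _) (by linarith [hf' t ht.le])
  refine ⟨max (g T₀) 0 * T₀ ^ (-σ) + E / σ, fun t ht => ?_⟩
  have ht₀ : 0 < t := hT₀.trans_le ht
  have hgt : g t ≤ g T₀ := hanti Set.self_mem_Ici ht ht
  have hσt : t ^ (-σ) ≤ T₀ ^ (-σ) := rpow_le_rpow_of_nonpos hT₀ ht (by linarith)
  have e₁ : t ^ (-a) * t ^ a = 1 := by rw [← rpow_add ht₀, neg_add_cancel, rpow_zero]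
  have e₂ : t ^ (-a) = t ^ (-σ) * t ^ (1 - β) := by
    rw [← rpow_add ht₀]; congr 1; simp only [σ]; ring
  have e₃ : t ^ (-a) * t ^ σ = t ^ (1 - β) := by
    rw [← rpow_add ht₀]; congr 1; simp only [σ]; ring
  calc f t = t ^ (-a) * (t ^ a * f t) := by rw [← mul_assoc, e₁, one_mul]
    _ ≤ t ^ (-a) * (g T₀ + E / σ * t ^ σ) :=
        mul_le_mul_of_nonneg_left (by simp only [g] at hgt; linarith) (rpow_nonneg ht₀.le _)
    _ = g T₀ * t ^ (-σ) * t ^ (1 - β) + E / σ * t ^ (1 - β) := by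
        linear_combination E / σ * e₃ + g T₀ * e₂
    _ ≤ max (g T₀) 0 * T₀ ^ (-σ) * t ^ (1 - β) + E / σ * t ^ (1 - β) := by
        have := mul_le_mul (le_max_left (g T₀) 0) hσt (rpow_nonneg ht₀.le _) (le_max_right _ _)
        gcongr
    _ = _ := by ring

lemma eventually_le_of_hasDerivWithinAt_le {f f' : ℝ → ℝ} {T₀ a β E : ℝ} (hT₀ : 0 < T₀)
    (ha : 0 < a) (hβ : 1 < β) (hE : 0 ≤ E)
    (hf : ∀ t ≥ T₀, HasDerivWithinAt f (f' t) (Set.Ici T₀) t)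
    (hf' : ∀ t ≥ T₀, f' t ≤ -(a / t) * f t + E * t ^ (-β)) {η : ℝ} (hη : 0 < η) :
    ∀ᶠ t in Filter.atTop, f t ≤ η := by
  -- trade part of the decay of the forcing term for the rate `s < a`
  set s := min a (β - 1) / 2
  have hs : 0 < s := by positivity
  have hsβ : 1 + s ≤ β := by have := min_le_right a (β - 1); simp only [s]; linarith
  have hforce : ∀ t ≥ T₀, E * t ^ (-β) ≤ E * T₀ ^ (1 + s - β) * t ^ (-(1 + s)) := by
    intro t ht
    have ht₀ : 0 < t := hT₀.trans_le ht
    rw [mul_assoc, show -β = (1 + s - β) + -(1 + s) by ring, rpow_add ht₀]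
    exact mul_le_mul_of_nonneg_left (mul_le_mul_of_nonneg_right
      (rpow_le_rpow_of_nonpos hT₀ ht (by linarith)) (rpow_nonneg ht₀.le _)) hE
  have hsa : 1 + s - 1 < a := by have := min_le_left a (β - 1); simp only [s]; linarith
  obtain ⟨C, hC⟩ := le_mul_rpow_of_hasDerivWithinAt_le (E := E * T₀ ^ (1 + s - β)) hT₀ hsa hf
    fun t ht => (hf' t ht).trans (by linarith [hforce t ht])
  have hlim : Filter.Tendsto (fun t : ℝ => C * t ^ (-s)) Filter.atTop (nhds 0) := by
    simpa using (tendsto_rpow_neg_atTop hs).const_mul C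
  filter_upwards [Filter.eventually_ge_atTop T₀, hlim.eventually (ge_mem_nhds hη)] with t ht hCt
  exact (hC t ht).trans (by rwa [show 1 - (1 + s) = -s by ring])

lemma exists_pos_le_mul_rpow_of_le {g : ℝ → ℝ} {T T₁ M C s : ℝ} (hT : 0 < T) (hTT₁ : T ≤ T₁)
    (hs : s ≤ 0) (hM : 0 ≤ M) (hg : ∀ t ≥ T, g t ≤ M) (hC : ∀ t ≥ T₁, g t ≤ C * t ^ s) :
    ∃ C' > 0, ∀ t ≥ T, g t ≤ C' * t ^ s := by
  refine ⟨max (max C (M * T₁ ^ (-s))) 1, by positivity, fun t ht => ?_⟩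
  have ht₀ : 0 < t := hT.trans_le ht
  have hts : 0 ≤ t ^ s := rpow_nonneg ht₀.le _
  rcases le_or_gt T₁ t with h | h
  · exact (hC t h).trans
      (mul_le_mul_of_nonneg_right ((le_max_left _ _).trans (le_max_left _ _)) hts)
  · calc g t ≤ M * T₁ ^ (-s) * T₁ ^ s := by
          rw [mul_assoc, ← rpow_add (hT.trans_le hTT₁), neg_add_cancel, rpow_zero, mul_one]
          exact hg t ht
      _ ≤ M * T₁ ^ (-s) * t ^ s := mul_le_mul_of_nonneg_left
          (rpow_le_rpow_of_nonpos ht₀ h.le hs) (mul_nonneg hM (rpow_nonneg (by linarith) _))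
      _ ≤ _ := mul_le_mul_of_nonneg_right ((le_max_right _ _).trans (le_max_left _ _)) hts

lemma sqrt_le_sqrt_mul_rpow {y C t s : ℝ} (ht : 0 < t) (h : y ≤ C * t ^ (2 * s)) :
    √y ≤ √C * t ^ s := by
  rw [mul_comm 2 s, rpow_mul ht.le, rpow_two] at h
  exact (sqrt_le_sqrt h).trans_eq (by rw [sqrt_mul' _ (sq_nonneg _), sqrt_sq (rpow_nonneg ht.le _)])

theorem perturbed_system_decay_general (K : ℕ)
    (θ T M Cθ : ℝ) (hθ1 : 1 < θ) (hθ2 : θ < 3 / 2)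
    (hT : 0 < T) (hM : 0 < M)
    (ξ r : ℝ → Fin K → ℝ)
    (hderiv : ∀ t ≥ T, ∀ k : Fin K,
      HasDerivWithinAt (fun s => ξ s k) (t⁻¹ * Phi K (ξ t) k + r t k) (Set.Ici T) t)
    (hbound : ∀ t ≥ T, Real.sqrt (∑ k, ξ t k ^ 2) ≤ M)
    (hr : ∀ t ≥ T, Real.sqrt (∑ k, r t k ^ 2) ≤ Cθ * t ^ (-θ))
    (hproj : ∀ t ≥ T, |∑ k, ξ t k * (1 / Real.sqrt K)| ≤ Cθ * t ^ (-θ + 1)) :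
    ∃ C' > 0, ∀ t ≥ T, Real.sqrt (∑ k, ξ t k ^ 2) ≤ C' * t ^ (-θ + 1) := by
  set f : ℝ → ℝ := fun t => ∑ k, ξ t k ^ 2
  have hf (t : ℝ) (ht : t ≥ T) := hasDerivWithinAt_sum_sq (hderiv t ht)
  -- wherever `‖ξ‖ ≤ B / 2`, the square norm decays at rate `exp (-B)`
  have hf' {T₀ B : ℝ} (hT₀ : T ≤ T₀) (hB : 0 < B) (hsmall : ∀ t ≥ T₀, 2 * √(f t) ≤ B)
      (t : ℝ) (ht : t ≥ T₀) :=
    sum_two_mul_inv_mul_Phi_add_le_rpow (ξ t) (r t) (hT.trans_le (hT₀.trans ht)) hB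
      (hsmall t ht) (exp_pos _) (exp_neg_le_one_sub_exp_neg_div hB) (hproj t (hT₀.trans ht))
      (hr t (hT₀.trans ht))
  set B := -log (θ - 1 / 2)
  have hB : 0 < B := neg_pos.2 (log_neg (by linarith) (by linarith))
  have hexpB : exp (-B) = θ - 1 / 2 := by rw [neg_neg, exp_log (by linarith)]
  obtain ⟨T₁, hT₁⟩ := Filter.eventually_atTop.1
    ((eventually_le_of_hasDerivWithinAt_le hT (exp_pos _) (by linarith) (by positivity) hf
      (hf' (B := 2 * M) le_rfl (by positivity) fun t ht => by linarith [hbound t ht])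
      (by positivity : 0 < (B / 2) ^ 2)).and (Filter.eventually_ge_atTop T))
  have hTT₁ : T ≤ T₁ := (hT₁ T₁ le_rfl).2
  have hsmall (t : ℝ) (ht : t ≥ T₁) : 2 * √(f t) ≤ B := by
    linarith [sqrt_le_iff.2 ⟨by positivity, (hT₁ t ht).1⟩]
  obtain ⟨C, hC⟩ := le_mul_rpow_of_hasDerivWithinAt_le (hT.trans_le hTT₁)
    (by rw [hexpB]; linarith) (fun t ht => (hf t (hTT₁.trans ht)).mono (Set.Ici_subset_Ici.2 hTT₁))
    (hf' hTT₁ hB hsmall)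
  exact exists_pos_le_mul_rpow_of_le hT hTT₁ (by linarith) hM.le hbound fun t ht =>
    sqrt_le_sqrt_mul_rpow (hT.trans_le (hTT₁.trans ht))
      ((hC t ht).trans_eq (by rw [show 1 - (2 * θ - 1) = 2 * (-θ + 1) by ring]))

theorem perturbed_system_decay (K : ℕ) (hK : 2 ≤ K)
    (θ T M Cθ : ℝ) (hθ1 : 1 < θ) (hθ2 : θ < 3 / 2)
    (hT : 0 < T) (hM : 0 < M) (hCθ : 0 < Cθ)
    (ξ r : ℝ → Fin K → ℝ)
    (hderiv : ∀ t ≥ T, ∀ k : Fin K,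
      HasDerivWithinAt (fun s => ξ s k) (t⁻¹ * Phi K (ξ t) k + r t k) (Set.Ici T) t)
    (hrcont : ∀ k : Fin K, ContinuousOn (fun t => r t k) (Set.Ici T))
    (hbound : ∀ t ≥ T, Real.sqrt (∑ k, ξ t k ^ 2) ≤ M)
    (hr : ∀ t ≥ T, Real.sqrt (∑ k, r t k ^ 2) ≤ Cθ * t ^ (-θ))
    (hproj : ∀ t ≥ T, |∑ k, ξ t k * (1 / Real.sqrt K)| ≤ Cθ * t ^ (-θ + 1)) :
    ∃ C' > 0, ∀ t ≥ T, Real.sqrt (∑ k, ξ t k ^ 2) ≤ C' * t ^ (-θ + 1) :=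
  perturbed_system_decay_general K θ T M Cθ hθ1 hθ2 hT hM ξ r hderiv hbound hr hproj
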